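/- arXiv:1705.05786 — 4 statements merged into one kernel-verified Lean document; each statement's English description precedes it below -/
import Mathlib

section
/- Let f be a bLSP morphism of A*, let w be an infinite word over A, and suppose a non-empty finite word u is an (a, b, c, β, γ)-fragility of f(w). Then there exist letters a', b', c' occurring in w and a finite word v such that: v is an (a', b', c', β, γ)-fragility of w (in particular a', b', c' are pairwise distinct), |v| < |u|, f(v) is a proper prefix of u, and the words ua, βub, γuc are respectively prefixes of f(va')α, βf(vb')α, γf(vc')α, where α = first(f). -/
/-- `u` is a prefix of the infinite word `w`. -/
def PrefI {A : Type*} (u : List A) (w : ℕ → A) : Prop :=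
  ∀ i (h : i < u.length), u[i] = w i

/-- `u` is a factor of the infinite word `w`. -/
def FactorI {A : Type*} (w : ℕ → A) (u : List A) : Prop :=
  ∃ k, ∀ i (h : i < u.length), u[i] = w (k + i)

/-- The infinite word `w` is LSP: every left special factor of `w` is a prefix of `w`. -/
def LSPInf {A : Type*} (w : ℕ → A) : Prop :=
  ∀ (u : List A) (a b : A), a ≠ b → FactorI w (a :: u) → FactorI w (b :: u) → PrefI u w

/-- `f` is a bLSP morphism (given by its action on letters). -/
def IsBLSP {A : Type*} (f : A → List A) : Prop :=
  ∃ α, f α = [α] ∧ ∀ β, β ≠ α → ∃ γ, f β = f γ ++ [β]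

/-- `v` is the image of the infinite word `w` under the non-erasing morphism `f`,
i.e. every finite concatenation `f (w 0) ++ ⋯ ++ f (w (n-1))` is a prefix of `v`. -/
def IsImage {A B : Type*} (f : A → List B) (w : ℕ → A) (v : ℕ → B) : Prop :=
  ∀ n, PrefI (((List.range n).map w).flatMap f) v

/-- `u` is an `(a, b, c, β, γ)`-fragility of `w`: `ua` is a prefix of `w` while
`βub` and `γuc` are factors of `w`. -/
def FragilityAt {A : Type*} (w : ℕ → A) (u : List A) (a b c β γ : A) : Prop :=
  PrefI (u ++ [a]) w ∧ FactorI w (β :: (u ++ [b])) ∧ FactorI w (γ :: (u ++ [c]))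

/-- `w` is `(a, b, c)`-fragile. -/
def Fragile {A : Type*} (w : ℕ → A) (a b c : A) : Prop :=
  ∃ β γ, β ≠ γ ∧ ∃ u, FragilityAt w u a b c β γ

/-- `f` is LSP `(a, b, c)`-breaking: the image of every `(a, b, c)`-fragile
infinite LSP word under `f` is not LSP. -/
def Breaking {A : Type*} (f : A → List A) (a b c : A) : Prop :=
  ∀ w : ℕ → A, LSPInf w → Fragile w a b c → ∀ v, IsImage f w v → ¬ LSPInf v

/-! Under a bLSP morphism every letter image starts with `α = first(f)`, contains no other `α`
and ends with its own letter, so the occurrences of `α` in `f(w)` are exactly the boundaries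
between letter images. Each of the three occurrences of `u` in the fragility starts at such a
boundary; cutting `u` before its last `α` gives the image `f(v)` of a word `v`, the same word for
all three occurrences since `f` is injective on words. The letters after `v` differ because the
letters after `u` do, and the letter before a boundary is the last letter of the preceding image,
which recovers `β` and `γ`. -/

namespace List

variable {A : Type*}

lemma eq_of_append_cons_eq_append_cons {P P' S S' : List A} {a : A} (hS : a ∉ S) (hS' : a ∉ S')
    (h : P ++ a :: S = P' ++ a :: S') : P = P' ∧ S = S' := by
  rcases append_eq_append_iff.1 h with ⟨_ | ⟨x, c⟩, rfl, h⟩ | ⟨_ | ⟨x, c⟩, rfl, h⟩ <;>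
    simp_all

lemma exists_eq_append_of_append_eq_append_cons {t R X Z : List A} {a : A} (ht : a ∉ t)
    (h : t ++ R = X ++ a :: Z) : ∃ X', X = t ++ X' ∧ R = X' ++ a :: Z := by
  rcases append_eq_append_iff.1 h with ⟨X', rfl, rfl⟩ | ⟨_ | ⟨x, c⟩, rfl, h⟩
  · exact ⟨X', rfl, rfl⟩
  · exact ⟨[], by simp, by simpa using h⟩
  · simp_all

lemma length_le_length_flatMap {B : Type*} {f : A → List B} (hf : ∀ x, f x ≠ [])
    (L : List A) : L.length ≤ (L.flatMap f).length := by
  induction L with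
  | nil => simp
  | cons x L ih =>
    have := length_pos_iff.2 (hf x)
    simp only [flatMap_cons, length_append, length_cons]
    omega

end List

section Marked

variable {A : Type*} {f : A → List A} {α : A}

lemma IsBLSP.ne_nil (hf : IsBLSP f) (x : A) : f x ≠ [] := by
  obtain ⟨α, hα, h⟩ := hf
  by_cases hx : x = α
  · simp [hx, hα]
  · obtain ⟨γ, hγ⟩ := h x hx
    simp [hγ]

lemma IsBLSP.exists_eq_append_self (hf : IsBLSP f) (x : A) : ∃ t, f x = t ++ [x] := by
  obtain ⟨α, hα, h⟩ := hf
  by_cases hx : x = α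
  · exact ⟨[], by simp [hx, hα]⟩
  · obtain ⟨γ, hγ⟩ := h x hx
    exact ⟨f γ, hγ⟩

lemma IsBLSP.injective (hf : IsBLSP f) : Function.Injective f := by
  intro x y hxy
  obtain ⟨t, ht⟩ := hf.exists_eq_append_self x
  obtain ⟨t', ht'⟩ := hf.exists_eq_append_self y
  rw [ht, ht'] at hxy
  simpa using (List.append_inj' hxy rfl).2

/-- Any letter fixed by a bLSP morphism is its first letter. -/
lemma IsBLSP.eq_append_of_ne (hf : IsBLSP f) (hα : f α = [α]) (x : A) (hx : x ≠ α) :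
    ∃ γ, f x = f γ ++ [x] := by
  obtain ⟨α', hα', h⟩ := hf
  obtain rfl | hne := eq_or_ne α α'
  · exact h x hx
  · obtain ⟨γ, hγ⟩ := h α hne
    rw [hα, eq_comm, List.append_eq_singleton_iff] at hγ
    exact absurd (hγ.resolve_right (by simp)).1 (IsBLSP.ne_nil ⟨α', hα', h⟩ γ)

def IsMarkedBy (f : A → List A) (α : A) : Prop :=
  ∀ x, ∃ t, f x = α :: t ∧ α ∉ t

lemma IsBLSP.isMarkedBy (hf : IsBLSP f) (hα : f α = [α]) : IsMarkedBy f α := by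
  intro x
  induction hn : (f x).length using Nat.strong_induction_on generalizing x with
  | _ n ih =>
    by_cases hx : x = α
    · exact ⟨[], by simp [hx, hα]⟩
    · obtain ⟨γ, hγ⟩ := hf.eq_append_of_ne hα x hx
      obtain ⟨t, ht, hαt⟩ := ih _ (by simp [← hn, hγ]) γ rfl
      exact ⟨t ++ [x], by simp [hγ, ht], by simp [hαt, Ne.symm hx]⟩

namespace IsMarkedBy

lemma ne_nil (hm : IsMarkedBy f α) (x : A) : f x ≠ [] := by
  obtain ⟨t, ht, -⟩ := hm x
  simp [ht]

lemma singleton_prefix (hm : IsMarkedBy f α) (L : List A) : [α] <+: L.flatMap f ++ [α] := by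
  cases L with
  | nil => simp
  | cons x L =>
    obtain ⟨t, ht, -⟩ := hm x
    simp [ht]

lemma flatMap_injective (hm : IsMarkedBy f α) (hinj : Function.Injective f) :
    Function.Injective (List.flatMap f) := by
  intro p
  induction p using List.reverseRecOn with
  | nil =>
    intro q hq
    rcases q with _ | ⟨y, q⟩
    · rfl
    · exact absurd (List.flatMap_eq_nil_iff.1 hq.symm y (by simp)) (hm.ne_nil y)
  | append_singleton p x ih =>
    intro q hq
    rcases q.eq_nil_or_concat with rfl | ⟨q, y, rfl⟩
    · exact absurd (List.flatMap_eq_nil_iff.1 hq x (by simp)) (hm.ne_nil x)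
    obtain ⟨t, ht, hαt⟩ := hm x
    obtain ⟨t', ht', hαt'⟩ := hm y
    simp only [List.concat_eq_append, List.flatMap_append, List.flatMap_singleton, ht, ht'] at hq
    obtain ⟨hpq, htt'⟩ := List.eq_of_append_cons_eq_append_cons hαt hαt' hq
    rw [List.concat_eq_append, ih hpq, hinj (ht.trans (htt' ▸ ht'.symm))]

lemma exists_eq_append_of_flatMap_eq (hm : IsMarkedBy f α) {L X Z : List A}
    (h : L.flatMap f = X ++ α :: Z) : ∃ p q, L = p ++ q ∧ p.flatMap f = X := by
  induction L generalizing X with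
  | nil => simp at h
  | cons x L ih =>
    obtain ⟨t, ht, hαt⟩ := hm x
    rcases X with _ | ⟨y, X⟩
    · exact ⟨[], x :: L, rfl, rfl⟩
    simp only [List.flatMap_cons, ht, List.cons_append, List.cons.injEq] at h
    obtain ⟨X', rfl, hL⟩ := List.exists_eq_append_of_append_eq_append_cons hαt h.2
    obtain ⟨p, q, rfl, rfl⟩ := ih hL
    exact ⟨x :: p, q, rfl, by simp [ht, h.1]⟩

end IsMarkedBy

/-- `s y` parses `u d`: `f s` is `u` cut just before its last `α`, and `u d` is a prefix of
`f (s y) α`. -/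
def IsParse (f : A → List A) (α : A) (s : List A) (y : A) (u : List A) (d : A) : Prop :=
  (∃ S, α ∉ S ∧ u = s.flatMap f ++ α :: S) ∧ u ++ [d] <+: s.flatMap f ++ f y ++ [α]

lemma IsMarkedBy.exists_isParse (hm : IsMarkedBy f α) {L u : List A} {d : A} (hu : u ≠ [])
    (h : u ++ [d] <+: L.flatMap f ++ [α]) :
    ∃ s y q, L = s ++ y :: q ∧ IsParse f α s y u d := by
  induction L generalizing u with
  | nil =>
    have := h.length_le
    simp only [List.length_append, List.length_singleton, List.flatMap_nil, List.nil_append] at this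
    exact absurd (List.length_eq_zero_iff.1 (by omega)) hu
  | cons x L ih =>
    obtain ⟨t, ht, hαt⟩ := hm x
    rw [List.flatMap_cons, List.append_assoc] at h
    by_cases hlen : u.length ≤ (f x).length
    · have hud : u ++ [d] <+: f x ++ [α] :=
        List.prefix_of_prefix_length_le h
          ((List.prefix_append_right_inj _).2 (hm.singleton_prefix L)) (by simpa using hlen)
      have hux : u <+: f x :=
        List.prefix_of_prefix_length_le ((List.prefix_append _ _).trans hud)
          (List.prefix_append _ _) hlen
      obtain ⟨c, S, rfl⟩ := List.exists_cons_of_ne_nil hu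
      rw [ht, List.cons_prefix_cons] at hux
      refine ⟨[], x, L, rfl, ⟨S, fun hS => hαt (hux.2.subset hS), by simp [hux.1]⟩, ?_⟩
      simpa using hud
    · obtain ⟨u', rfl⟩ : f x <+: u :=
        List.prefix_of_prefix_length_le (List.prefix_append _ _)
          ((List.prefix_append _ _).trans h) (by omega)
      rw [List.append_assoc, List.prefix_append_right_inj] at h
      obtain ⟨s, y, q, rfl, ⟨S, hS, rfl⟩, hpre⟩ := ih (by rintro rfl; simp at hlen) h
      refine ⟨x :: s, y, q, rfl, ⟨S, hS, by simp⟩, ?_⟩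
      simpa [List.append_assoc] using hpre

namespace IsParse

variable {s s' u : List A} {y y' d d' : A}

lemma flatMap_prefix (h : IsParse f α s y u d) : s.flatMap f <+: u := by
  obtain ⟨⟨S, -, rfl⟩, -⟩ := h
  exact List.prefix_append _ _

lemma flatMap_ne (h : IsParse f α s y u d) : s.flatMap f ≠ u := by
  obtain ⟨⟨S, -, rfl⟩, -⟩ := h
  simp

lemma length_lt (hm : IsMarkedBy f α) (h : IsParse f α s y u d) : s.length < u.length := by
  obtain ⟨⟨S, -, rfl⟩, -⟩ := h
  have := List.length_le_length_flatMap hm.ne_nil s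
  simp only [List.length_append, List.length_cons]
  omega

lemma left_unique (hm : IsMarkedBy f α) (hinj : Function.Injective f)
    (h : IsParse f α s y u d) (h' : IsParse f α s' y' u d') : s = s' := by
  obtain ⟨⟨S, hS, rfl⟩, -⟩ := h
  obtain ⟨⟨S', hS', hu⟩, -⟩ := h'
  exact hm.flatMap_injective hinj (List.eq_of_append_cons_eq_append_cons hS hS' hu).1

lemma ne_of_ne (h : IsParse f α s y u d) (h' : IsParse f α s y' u d') (hd : d ≠ d') :
    y ≠ y' := by
  rintro rfl
  have := (List.prefix_of_prefix_length_le h.2 h'.2 (by simp)).eq_of_length (by simp)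
  exact hd (by simpa using this)

end IsParse

section Infinite

variable {w v : ℕ → A}

lemma getElem_eq_of_append_append_eq_map_range {N : ℕ} {X r Y : List A}
    (h : X ++ r ++ Y = (List.range N).map w) (i : ℕ) (hi : i < r.length) :
    r[i] = w (X.length + i) := by
  have hlen : X.length + i < N := by
    have := congrArg List.length h
    simp only [List.length_append, List.length_map, List.length_range] at this
    omega
  have := congrArg (·[X.length + i]?) h
  simp only [List.append_assoc, List.getElem?_append_right (Nat.le_add_right _ _),
    Nat.add_sub_cancel_left, List.getElem?_append_left hi, List.getElem?_map,
    List.getElem?_range hlen, List.getElem?_eq_getElem hi] at this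
  simpa using this

lemma prefI_of_prefix {N : ℕ} {r : List A} (h : r <+: (List.range N).map w) : PrefI r w := by
  obtain ⟨Y, hY⟩ := h
  intro i hi
  simpa using getElem_eq_of_append_append_eq_map_range (X := []) (by simpa using hY) i hi

lemma factorI_of_infix {N : ℕ} {r : List A} (h : r <:+: (List.range N).map w) : FactorI w r := by
  obtain ⟨X, Y, hXY⟩ := h
  exact ⟨X.length, getElem_eq_of_append_append_eq_map_range hXY⟩

lemma FactorI.exists_apply_eq {r : List A} {x : A} (h : FactorI w r) (hx : x ∈ r) :
    ∃ i, w i = x := by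
  obtain ⟨k, hk⟩ := h
  obtain ⟨i, hi, rfl⟩ := List.getElem_of_mem hx
  exact ⟨k + i, (hk i hi).symm⟩

lemma IsImage.apply_zero (hm : IsMarkedBy f α) (hv : IsImage f w v) : v 0 = α := by
  obtain ⟨t, ht, -⟩ := hm (w 0)
  simpa [ht] using (hv 1 0 (by simp [ht])).symm

lemma IsImage.exists_prefix_drop (hm : IsMarkedBy f α) (hv : IsImage f w v) {r : List A} {k : ℕ}
    (hr : ∀ i (h : i < r.length), r[i] = v (k + i)) :
    ∃ N, r <+: (((List.range N).map w).flatMap f).drop k := by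
  refine ⟨k + r.length, List.prefix_iff_eq_take.2 (List.ext_getElem ?_ fun i hi _ => ?_)⟩
  · have := List.length_le_length_flatMap hm.ne_nil ((List.range (k + r.length)).map w)
    simp only [List.length_map, List.length_range] at this
    simp only [List.length_take, List.length_drop]
    omega
  · simp only [List.getElem_take, List.getElem_drop]
    exact (hr i hi).trans (hv _ _ _).symm

end Infinite

section Occurrences

variable {w v : ℕ → A} {u : List A} {d : A}

lemma IsImage.exists_isParse_of_prefI (hm : IsMarkedBy f α) (hv : IsImage f w v) (hu : u ≠ [])
    (h : PrefI (u ++ [d]) v) : ∃ s y, PrefI (s ++ [y]) w ∧ IsParse f α s y u d := by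
  obtain ⟨N, hN⟩ := hv.exists_prefix_drop hm (k := 0) fun i hi => by simpa using h i hi
  rw [List.drop_zero] at hN
  obtain ⟨s, y, q, hW, hp⟩ := hm.exists_isParse hu (hN.trans (List.prefix_append _ _))
  exact ⟨s, y, prefI_of_prefix (N := N) ⟨q, by simp [hW]⟩, hp⟩

/-- An occurrence of `δ α u d` in `f w` starts at a letter boundary, so `δ` is the last letter of
the image of a letter `w i`, and `α u d` is parsed from position `i + 1` of `w` on. -/
lemma IsImage.exists_isParse_of_factorI (hf : IsBLSP f) (hm : IsMarkedBy f α)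
    (hv : IsImage f w v) {δ : A} (h : FactorI v (δ :: (α :: u ++ [d]))) :
    ∃ s y, FactorI w (δ :: (s ++ [y])) ∧ IsParse f α s y (α :: u) d := by
  obtain ⟨k, hk⟩ := h
  obtain ⟨N, Y, hY⟩ := hv.exists_prefix_drop hm hk
  obtain ⟨X, hX⟩ :
      ∃ X, ((List.range N).map w).flatMap f = X ++ [δ] ++ α :: (u ++ d :: Y) := by
    refine ⟨(((List.range N).map w).flatMap f).take k, ?_⟩
    conv_lhs => rw [← List.take_append_drop k (List.flatMap ..), ← hY]
    simp
  obtain ⟨p, q, hpq, hp⟩ := hm.exists_eq_append_of_flatMap_eq hX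
  have hq : q.flatMap f = α :: u ++ [d] ++ Y := by
    rw [hpq, List.flatMap_append, hp] at hX
    simpa using hX
  rcases p.eq_nil_or_concat with rfl | ⟨p, x, rfl⟩
  · simp at hp
  have hxδ : x = δ := by
    obtain ⟨t, ht⟩ := hf.exists_eq_append_self x
    simp only [List.concat_eq_append, List.flatMap_append, List.flatMap_singleton, ht,
      ← List.append_assoc] at hp
    exact (List.append_inj' hp rfl).2 |> List.singleton_inj.1
  obtain ⟨s, y, q', rfl, hs⟩ := hm.exists_isParse (u := α :: u) (d := d) (L := q) (by simp)
    (by rw [hq]; exact (List.prefix_append _ _).trans (List.prefix_append _ _))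
  refine ⟨s, y, factorI_of_infix (N := N) ⟨p, q', ?_⟩, hs⟩
  simp [hpq, hxδ]

end Occurrences

end Marked

theorem propagated_fragility_general {A : Type*} (f : A → List A) (hf : IsBLSP f)
    (α : A) (hα : f α = [α]) (w v : ℕ → A) (hv : IsImage f w v)
    (a b c β γ : A) (hab : a ≠ b) (hbc : b ≠ c) (hac : a ≠ c)
    (u : List A) (hu : u ≠ []) (hfrag : FragilityAt v u a b c β γ) :
    ∃ (a' b' c' : A) (v' : List A),
      (∃ i, w i = a') ∧ (∃ i, w i = b') ∧ (∃ i, w i = c') ∧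
      a' ≠ b' ∧ b' ≠ c' ∧ a' ≠ c' ∧
      FragilityAt w v' a' b' c' β γ ∧
      v'.length < u.length ∧
      (v'.flatMap f <+: u ∧ v'.flatMap f ≠ u) ∧
      (u ++ [a]) <+: (v'.flatMap f ++ f a' ++ [α]) ∧
      (β :: (u ++ [b])) <+: (β :: (v'.flatMap f ++ f b' ++ [α])) ∧
      (γ :: (u ++ [c])) <+: (γ :: (v'.flatMap f ++ f c' ++ [α])) := by
  have hm := hf.isMarkedBy hα
  obtain ⟨hpre, hfb, hfc⟩ := hfrag
  obtain ⟨s, a', hsa, hpa⟩ := hv.exists_isParse_of_prefI hm hu hpre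
  obtain ⟨u, rfl⟩ : ∃ u', u = α :: u' := by
    obtain ⟨x, u', rfl⟩ := List.exists_cons_of_ne_nil hu
    exact ⟨u', by simpa [hv.apply_zero hm] using hpre 0 (by simp)⟩
  obtain ⟨s₁, b', hsb, hpb⟩ := hv.exists_isParse_of_factorI hf hm hfb
  obtain ⟨s₂, c', hsc, hpc⟩ := hv.exists_isParse_of_factorI hf hm hfc
  obtain rfl := hpa.left_unique hm hf.injective hpb
  obtain rfl := hpa.left_unique hm hf.injective hpc
  refine ⟨a', b', c', s, ⟨s.length, by simpa using (hsa s.length (by simp)).symm⟩,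
    hsb.exists_apply_eq (by simp), hsc.exists_apply_eq (by simp),
    hpa.ne_of_ne hpb hab, hpb.ne_of_ne hpc hbc, hpa.ne_of_ne hpc hac, ⟨hsa, hsb, hsc⟩,
    hpa.length_lt hm, ⟨hpa.flatMap_prefix, hpa.flatMap_ne⟩, hpa.2,
    List.cons_prefix_cons.2 ⟨rfl, hpb.2⟩, List.cons_prefix_cons.2 ⟨rfl, hpc.2⟩⟩

theorem propagated_fragility {A : Type*} (f : A → List A) (hf : IsBLSP f)
    (α : A) (hα : f α = [α]) (w v : ℕ → A) (hv : IsImage f w v)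
    (a b c β γ : A) (hab : a ≠ b) (hbc : b ≠ c) (hac : a ≠ c) (hβγ : β ≠ γ)
    (u : List A) (hu : u ≠ []) (hfrag : FragilityAt v u a b c β γ) :
    ∃ (a' b' c' : A) (v' : List A),
      (∃ i, w i = a') ∧ (∃ i, w i = b') ∧ (∃ i, w i = c') ∧
      a' ≠ b' ∧ b' ≠ c' ∧ a' ≠ c' ∧
      FragilityAt w v' a' b' c' β γ ∧
      v'.length < u.length ∧
      (v'.flatMap f <+: u ∧ v'.flatMap f ≠ u) ∧
      (u ++ [a]) <+: (v'.flatMap f ++ f a' ++ [α]) ∧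
      (β :: (u ++ [b])) <+: (β :: (v'.flatMap f ++ f b' ++ [α])) ∧
      (γ :: (u ++ [c])) <+: (γ :: (v'.flatMap f ++ f c' ++ [α])) :=
  propagated_fragility_general f hf α hα w v hv a b c β γ hab hbc hac u hu hfrag
end

section
/- Let w, w', w'' be infinite LSP words over a finite alphabet A and let f, g be bLSP morphisms of A* with w = f(w') and w' = g(w''). For an infinite LSP word x, let Frag(x) denote the set of 5-tuples (a, b, c, β, γ) of letters such that x is (a, b, c, β, γ)-fragile. Then the triple ((alph(w), f, Frag(w)), f, (alph(w'), g, Frag(w'))) is a transition of the automaton A_bLSP. -/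
/-- A state of the automaton `A_bLSP`: a sub-alphabet, a morphism and
a set of 5-tuples of letters (representing fragilities). -/
structure StateB (A : Type*) where
  alph : Set A
  mor : A → List A
  frag : Set (A × A × A × A × A)

/-- `(q, f, q')` is a transition of the automaton `A_bLSP`. -/
def Transition {A : Type*} (q : StateB A) (f : A → List A) (q' : StateB A) : Prop :=
  IsBLSP f ∧
  f = q.mor ∧
  q.alph = {x | ∃ β ∈ q'.alph, x ∈ f β} ∧
  (∀ a b c β γ : A, (a, b, c, β, γ) ∈ q'.frag → ¬ Breaking f a b c) ∧
  (∀ a b c β γ : A, (a, b, c, β, γ) ∈ q.frag ↔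
    (a ∈ q.alph ∧ b ∈ q.alph ∧ c ∈ q.alph ∧ β ∈ q.alph ∧ γ ∈ q.alph ∧
     a ≠ b ∧ b ≠ c ∧ a ≠ c ∧ β ≠ γ ∧
     ((f a = [a] ∧ (∃ δ ∈ q'.alph, [β, b] <:+: f δ) ∧ (∃ δ ∈ q'.alph, [γ, c] <:+: f δ)) ∨
      (∃ a' b' c' : A, (a', b', c', β, γ) ∈ q'.frag ∧
        ∃ (x : List A) (α : A), f α = [α] ∧
          x ++ [a] <+: f a' ++ [α] ∧ x ++ [b] <+: f b' ++ [α] ∧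
          x ++ [c] <+: f c' ++ [α]))))

/-- The set of 5-tuples `(a, b, c, β, γ)` such that `w` is `(a, b, c, β, γ)`-fragile. -/
def FragSet {A : Type*} (w : ℕ → A) : Set (A × A × A × A × A) :=
  {t | t.1 ≠ t.2.1 ∧ t.2.1 ≠ t.2.2.1 ∧ t.1 ≠ t.2.2.1 ∧ t.2.2.2.1 ≠ t.2.2.2.2 ∧
    ∃ u, FragilityAt w u t.1 t.2.1 t.2.2.1 t.2.2.2.1 t.2.2.2.2}

section BLSPWords

variable {A : Type*}

theorem List.forall_getElem_concat_iff {x : List A} {d : A} {P : ℕ → A → Prop} :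
    (∀ i (hi : i < (x ++ [d]).length), P i (x ++ [d])[i]) ↔
      (∀ i (hi : i < x.length), P i x[i]) ∧ P x.length d := by
  constructor
  · intro h
    refine ⟨fun i hi => ?_, by simpa using h x.length (by simp)⟩
    have := h i (by simp; omega)
    rwa [List.getElem_append_left hi] at this
  · rintro ⟨h, hd⟩ i hi
    simp only [List.length_append, List.length_singleton] at hi
    rcases Nat.lt_succ_iff_lt_or_eq.1 hi with hi | rfl
    · rw [List.getElem_append_left hi]
      exact h i hi
    · simpa using hd

theorem List.forall_getElem_cons_iff {l : List A} {d : A} {P : ℕ → A → Prop} :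
    (∀ i (hi : i < (d :: l).length), P i (d :: l)[i]) ↔
      P 0 d ∧ ∀ i (hi : i < l.length), P (i + 1) l[i] :=
  ⟨fun h => ⟨h 0 (by simp), fun i hi => h (i + 1) (by simpa using hi)⟩,
    fun ⟨h₀, h⟩ i hi => by
      cases i with
      | zero => exact h₀
      | succ i => exact h i (by simpa using hi)⟩

theorem List.append_singleton_prefix_iff {x l : List A} {d : A} :
    x ++ [d] <+: l ↔ (∀ j (hj : j < x.length), l[j]? = some x[j]) ∧ l[x.length]? = some d := by
  rw [List.prefix_iff_getElem?, List.forall_getElem_concat_iff (P := fun j y => l[j]? = some y)]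

theorem List.eq_of_append_singleton_prefix {x l : List A} {d e : A} (hd : x ++ [d] <+: l)
    (he : x ++ [e] <+: l) : d = e :=
  Option.some_inj.1 ((List.append_singleton_prefix_iff.1 hd).2.symm.trans
    (List.append_singleton_prefix_iff.1 he).2)

def PrefixRepeatsAt (w : ℕ → A) (L p : ℕ) : Prop :=
  ∀ i < L, w (p + i) = w i

/-- `β (w 0 ⋯ w (L - 1)) b` occurs in `w` at position `k`: the factor `βub` of a fragility `u`
of length `L`. -/
def PrefixOccursAt (w : ℕ → A) (L k : ℕ) (β b : A) : Prop :=
  w k = β ∧ PrefixRepeatsAt w L (k + 1) ∧ w (k + 1 + L) = b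

theorem prefI_append_singleton_iff {w : ℕ → A} {u : List A} {a : A} :
    PrefI (u ++ [a]) w ↔ PrefI u w ∧ a = w u.length :=
  List.forall_getElem_concat_iff (P := fun i y => y = w i)

theorem prefI_map_range (w : ℕ → A) (L : ℕ) : PrefI ((List.range L).map w) w := by
  intro i hi
  simp

theorem PrefI.exists_prefixOccursAt_iff {w : ℕ → A} {u : List A} {β b : A} (hu : PrefI u w) :
    (∃ k, PrefixOccursAt w u.length k β b) ↔ FactorI w (β :: (u ++ [b])) := by
  refine exists_congr fun k => ?_
  rw [List.forall_getElem_cons_iff (P := fun i y => y = w (k + i)),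
    List.forall_getElem_concat_iff (P := fun i y => y = w (k + (i + 1)))]
  refine and_congr eq_comm (and_congr (forall₂_congr fun i hi => ?_) ?_)
  · rw [hu i hi, show k + (i + 1) = k + 1 + i by omega]
    exact eq_comm
  · rw [show k + (u.length + 1) = k + 1 + u.length by omega]
    exact eq_comm

theorem exists_fragilityAt_iff {w : ℕ → A} {a b c β γ : A} :
    (∃ u, FragilityAt w u a b c β γ) ↔
      ∃ L, w L = a ∧ (∃ k, PrefixOccursAt w L k β b) ∧ ∃ l, PrefixOccursAt w L l γ c := by
  constructor
  · rintro ⟨u, hua, hb, hc⟩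
    obtain ⟨hu, ha⟩ := prefI_append_singleton_iff.1 hua
    exact ⟨u.length, ha.symm, hu.exists_prefixOccursAt_iff.2 hb, hu.exists_prefixOccursAt_iff.2 hc⟩
  · rintro ⟨L, ha, hb, hc⟩
    have hu := prefI_map_range w L
    have hlen : ((List.range L).map w).length = L := by simp
    rw [← hlen] at ha hb hc
    exact ⟨_, prefI_append_singleton_iff.2 ⟨hu, ha.symm⟩, hu.exists_prefixOccursAt_iff.1 hb,
      hu.exists_prefixOccursAt_iff.1 hc⟩

theorem mem_fragSet_iff {w : ℕ → A} {a b c β γ : A} :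
    (a, b, c, β, γ) ∈ FragSet w ↔ a ≠ b ∧ b ≠ c ∧ a ≠ c ∧ β ≠ γ ∧
      ∃ L, w L = a ∧ (∃ k, PrefixOccursAt w L k β b) ∧ ∃ l, PrefixOccursAt w L l γ c := by
  rw [← exists_fragilityAt_iff]
  rfl

theorem mem_range_of_mem_fragSet {w : ℕ → A} {a b c β γ : A} (h : (a, b, c, β, γ) ∈ FragSet w) :
    a ∈ Set.range w ∧ b ∈ Set.range w ∧ c ∈ Set.range w ∧ β ∈ Set.range w ∧ γ ∈ Set.range w := by
  obtain ⟨-, -, -, -, L, ha, ⟨k, hβ, -, hb⟩, l, hγ, -, hc⟩ := mem_fragSet_iff.1 h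
  exact ⟨⟨L, ha⟩, ⟨_, hb⟩, ⟨_, hc⟩, ⟨k, hβ⟩, ⟨l, hγ⟩⟩

structure IsBLSPWith (f : A → List A) (α : A) : Prop where
  map_first : f α = [α]
  exists_eq_append : ∀ β, β ≠ α → ∃ γ, f β = f γ ++ [β]

theorem IsBLSP.exists_isBLSPWith {f : A → List A} (hf : IsBLSP f) : ∃ α, IsBLSPWith f α :=
  let ⟨α, hα, hstep⟩ := hf
  ⟨α, hα, hstep⟩

namespace IsBLSPWith

variable {f : A → List A} {α : A} (hf : IsBLSPWith f α)
include hf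

theorem exists_eq_cons (β : A) : ∃ r, f β = α :: r ∧ α ∉ r := by
  induction hn : (f β).length using Nat.strong_induction_on generalizing β with
  | _ n ih =>
  by_cases h : β = α
  · exact ⟨[], by simp [h, hf.map_first]⟩
  · obtain ⟨γ, hγ⟩ := hf.exists_eq_append β h
    obtain ⟨r, hr, hαr⟩ := ih _ (by simp [← hn, hγ]) γ rfl
    exact ⟨r ++ [β], by simp [hγ, hr], by simp [hαr, Ne.symm h]⟩

theorem ne_nil (β : A) : f β ≠ [] := by
  obtain ⟨r, hr, -⟩ := hf.exists_eq_cons β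
  simp [hr]

theorem getLast?_eq (β : A) : (f β).getLast? = some β := by
  by_cases h : β = α
  · simp [h, hf.map_first]
  · obtain ⟨γ, hγ⟩ := hf.exists_eq_append β h
    simp [hγ]

theorem injective : Function.Injective f := fun a b h => by
  simpa [hf.getLast?_eq] using congrArg List.getLast? h

theorem map_eq_singleton_iff {a : A} : f a = [a] ↔ a = α := by
  refine ⟨fun h => ?_, fun h => h ▸ hf.map_first⟩
  obtain ⟨r, hr, -⟩ := hf.exists_eq_cons a
  simp_all

end IsBLSPWith

def blockStart (f : A → List A) (w' : ℕ → A) (n : ℕ) : ℕ :=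
  (((List.range n).map w').flatMap f).length

@[simp]
theorem blockStart_zero (f : A → List A) (w' : ℕ → A) : blockStart f w' 0 = 0 := rfl

theorem blockStart_succ (f : A → List A) (w' : ℕ → A) (n : ℕ) :
    blockStart f w' (n + 1) = blockStart f w' n + (f (w' n)).length := by
  simp [blockStart, List.range_succ]

theorem blockStart_strictMono {f : A → List A} (hne : ∀ a, f a ≠ []) (w' : ℕ → A) :
    StrictMono (blockStart f w') :=
  strictMono_nat_of_lt_succ fun n => by
    simp [blockStart_succ, List.length_pos_iff.2 (hne (w' n))]

theorem exists_blockStart_le_lt {f : A → List A} (hne : ∀ a, f a ≠ []) (w' : ℕ → A) (i : ℕ) :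
    ∃ n, blockStart f w' n ≤ i ∧ i < blockStart f w' (n + 1) := by
  have hS := blockStart_strictMono hne w'
  induction i with
  | zero => exact ⟨0, le_rfl, hS Nat.zero_lt_one⟩
  | succ i ih =>
    obtain ⟨n, h₁, h₂⟩ := ih
    by_cases h : i + 1 < blockStart f w' (n + 1)
    · exact ⟨n, by omega, h⟩
    · exact ⟨n + 1, by omega, by have := hS (show n + 1 < n + 1 + 1 by omega); omega⟩

theorem blockStart_add_of_prefixRepeatsAt {f : A → List A} {w' : ℕ → A} {m p : ℕ}
    (hsh : PrefixRepeatsAt w' m p) :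
    ∀ t ≤ m, blockStart f w' (p + t) = blockStart f w' p + blockStart f w' t
  | 0, _ => rfl
  | t + 1, ht => by
    rw [← Nat.add_assoc, blockStart_succ, blockStart_succ,
      blockStart_add_of_prefixRepeatsAt hsh t (by omega), hsh t (by omega), Nat.add_assoc]

namespace IsImage

variable {f : A → List A} {w' w : ℕ → A} (hwf : IsImage f w' w)
include hwf

theorem apply_blockStart_add {n j : ℕ} (hj : j < (f (w' n)).length) :
    w (blockStart f w' n + j) = (f (w' n))[j] := by
  have hsplit : ((List.range (n + 1)).map w').flatMap f
      = ((List.range n).map w').flatMap f ++ f (w' n) := by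
    simp [List.range_succ]
  have h := hwf (n + 1) (blockStart f w' n + j) (by rw [hsplit]; simp [blockStart]; omega)
  rw [← h, List.getElem_of_eq hsplit, List.getElem_append_right (by simp [blockStart])]
  simp [blockStart]

theorem getElem?_eq {n j : ℕ} (hj : j < (f (w' n)).length) :
    (f (w' n))[j]? = some (w (blockStart f w' n + j)) := by
  rw [hwf.apply_blockStart_add hj, List.getElem?_eq_getElem hj]

theorem range_eq (hne : ∀ a, f a ≠ []) : Set.range w = {x | ∃ β ∈ Set.range w', x ∈ f β} := by
  ext x
  rw [Set.mem_ofPred_eq, Set.exists_range_iff]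
  constructor
  · rintro ⟨i, rfl⟩
    obtain ⟨n, h₁, h₂⟩ := exists_blockStart_le_lt hne w' i
    have hj : i - blockStart f w' n < (f (w' n)).length := by
      rw [blockStart_succ] at h₂; omega
    refine ⟨n, ?_⟩
    rw [show i = blockStart f w' n + (i - blockStart f w' n) by omega,
      hwf.apply_blockStart_add hj]
    exact List.getElem_mem hj
  · rintro ⟨n, hx⟩
    obtain ⟨j, hj, rfl⟩ := List.mem_iff_getElem.1 hx
    exact ⟨_, hwf.apply_blockStart_add hj⟩

theorem factorI_of_infix {l : List A} {n : ℕ} (h : l <:+: f (w' n)) : FactorI w l := by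
  obtain ⟨k, hk, hl⟩ := List.infix_iff_getElem?.1 h
  refine ⟨blockStart f w' n + k, fun i hi => ?_⟩
  have hik : i + k < (f (w' n)).length := by omega
  have := hl i hi
  rw [List.getElem?_eq_getElem hik, Option.some_inj] at this
  rw [← this, ← hwf.apply_blockStart_add hik, Nat.add_assoc, Nat.add_comm k]

theorem exists_prefixOccursAt_zero_of_infix {n : ℕ} {β b : A} (h : [β, b] <:+: f (w' n)) :
    ∃ k, PrefixOccursAt w 0 k β b := by
  obtain ⟨k, hk⟩ := hwf.factorI_of_infix h
  exact ⟨k, (hk 0 (by simp)).symm, fun i hi => absurd hi (Nat.not_lt_zero i), (hk 1 (by simp)).symm⟩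

theorem prefixRepeatsAt_image (hne : ∀ a, f a ≠ []) {m p : ℕ} (hsh : PrefixRepeatsAt w' m p) :
    PrefixRepeatsAt w (blockStart f w' m) (blockStart f w' p) := by
  intro i hi
  obtain ⟨t, h₁, h₂⟩ := exists_blockStart_le_lt hne w' i
  have ht : t < m := (blockStart_strictMono hne w').lt_iff_lt.1 (by omega)
  rw [blockStart_succ] at h₂
  have h := hwf.getElem?_eq (n := p + t) (j := i - blockStart f w' t) (by rw [hsh t ht]; omega)
  rw [hsh t ht, hwf.getElem?_eq (by omega), Option.some_inj,
    blockStart_add_of_prefixRepeatsAt hsh t ht.le] at h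
  rw [show i = blockStart f w' t + (i - blockStart f w' t) by omega, ← Nat.add_assoc]
  exact h.symm

end IsImage

section BLSPImage

variable {f : A → List A} {α : A} {w' w : ℕ → A} (hf : IsBLSPWith f α) (hwf : IsImage f w' w)
include hf hwf

theorem apply_blockStart (n : ℕ) : w (blockStart f w' n) = α := by
  obtain ⟨r, hr, -⟩ := hf.exists_eq_cons (w' n)
  simpa [hr] using hwf.apply_blockStart_add (n := n) (j := 0) (by simp [hr])

theorem apply_eq_first_iff {i : ℕ} : w i = α ↔ ∃ n, blockStart f w' n = i := by
  refine ⟨fun hi => ?_, fun ⟨n, hn⟩ => hn ▸ apply_blockStart hf hwf n⟩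
  obtain ⟨n, h₁, h₂⟩ := exists_blockStart_le_lt hf.ne_nil w' i
  obtain ⟨r, hr, hαr⟩ := hf.exists_eq_cons (w' n)
  refine ⟨n, le_antisymm h₁ (not_lt.1 fun hlt => hαr ?_)⟩
  rw [blockStart_succ] at h₂
  have h := hwf.getElem?_eq (n := n) (j := i - blockStart f w' n) (by omega)
  rw [show blockStart f w' n + (i - blockStart f w' n) = i by omega, hi, hr,
    show i - blockStart f w' n = i - blockStart f w' n - 1 + 1 by omega,
    List.getElem?_cons_succ] at h
  exact List.mem_of_getElem? h

theorem blockStart_succ_le {t i : ℕ} (ht : blockStart f w' t < i) (hi : w i = α) :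
    blockStart f w' (t + 1) ≤ i := by
  have hS := blockStart_strictMono hf.ne_nil w'
  obtain ⟨r, rfl⟩ := (apply_eq_first_iff hf hwf).1 hi
  exact hS.monotone (hS.lt_iff_lt.1 ht)

theorem apply_blockStart_succ_sub_one (n : ℕ) : w (blockStart f w' (n + 1) - 1) = w' n := by
  have hlen := List.length_pos_iff.2 (hf.ne_nil (w' n))
  have h := hf.getLast?_eq (w' n)
  rw [List.getLast?_eq_getElem?, hwf.getElem?_eq (by omega), Option.some_inj] at h
  rw [← h, blockStart_succ]
  congr 1
  omega

theorem getElem?_block_append_first {n j : ℕ} (hj : j ≤ (f (w' n)).length) :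
    (f (w' n) ++ [α])[j]? = some (w (blockStart f w' n + j)) := by
  rcases hj.lt_or_eq with hj | rfl
  · rw [List.getElem?_append_left hj, hwf.getElem?_eq hj]
  · rw [← blockStart_succ, apply_blockStart hf hwf]
    simp

theorem append_singleton_prefix_block_iff {x : List A} {d : A} {n : ℕ} :
    x ++ [d] <+: f (w' n) ++ [α] ↔ x.length ≤ (f (w' n)).length ∧
      (∀ j (hj : j < x.length), w (blockStart f w' n + j) = x[j]) ∧
        w (blockStart f w' n + x.length) = d := by
  rw [List.append_singleton_prefix_iff]
  constructor
  · rintro ⟨hx, hd⟩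
    have hlen : x.length ≤ (f (w' n)).length := by
      have := (List.getElem?_eq_some_iff.1 hd).1
      simp only [List.length_append, List.length_singleton] at this
      omega
    refine ⟨hlen, fun j hj => ?_, ?_⟩
    · simpa [getElem?_block_append_first hf hwf (show j ≤ (f (w' n)).length by omega)] using hx j hj
    · simpa [getElem?_block_append_first hf hwf hlen] using hd
  · rintro ⟨hlen, hx, hd⟩
    refine ⟨fun j hj => ?_, ?_⟩
    · rw [getElem?_block_append_first hf hwf (by omega), hx j hj]
    · rw [getElem?_block_append_first hf hwf hlen, hd]

end BLSPImage

section Desubstitution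

variable {f : A → List A} {α : A} {w' w : ℕ → A} (hf : IsBLSPWith f α) (hwf : IsImage f w' w)
  {L m n : ℕ}
include hf hwf

theorem blockStart_add_of_prefixRepeatsAt_image
    (hsh : PrefixRepeatsAt w L (blockStart f w' n)) (hm : blockStart f w' m < L) :
    ∀ t ≤ m, blockStart f w' (n + t) = blockStart f w' n + blockStart f w' t
  | 0, _ => rfl
  | t + 1, ht => by
    have ih := blockStart_add_of_prefixRepeatsAt_image hsh hm t (by omega)
    have hS := blockStart_strictMono hf.ne_nil w'
    have := hS.monotone ht
    have := hS (Nat.lt_add_one t)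
    have := hS (Nat.lt_add_one (n + t))
    -- both sides are the first position of `α` after `blockStart f w' (n + t)`
    have h₁ : blockStart f w' (n + t + 1) ≤ blockStart f w' n + blockStart f w' (t + 1) :=
      blockStart_succ_le hf hwf (by omega) (by rw [hsh _ (by omega), apply_blockStart hf hwf])
    have h₂ : blockStart f w' (t + 1) ≤ blockStart f w' (n + t + 1) - blockStart f w' n :=
      blockStart_succ_le hf hwf (by omega) (by
        rw [← hsh _ (by omega), Nat.add_sub_cancel' (by omega), apply_blockStart hf hwf])
    rw [← Nat.add_assoc]
    omega

theorem prefixRepeatsAt_preimage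
    (hsh : PrefixRepeatsAt w L (blockStart f w' n)) (hm : blockStart f w' m < L) :
    PrefixRepeatsAt w' m n := by
  intro t ht
  have h₀ := blockStart_add_of_prefixRepeatsAt_image hf hwf hsh hm t ht.le
  have h₁ := blockStart_add_of_prefixRepeatsAt_image hf hwf hsh hm (t + 1) ht
  have := (blockStart_strictMono hf.ne_nil w').monotone (Nat.succ_le_of_lt ht)
  rw [← Nat.add_assoc, blockStart_succ, blockStart_succ] at h₁
  apply hf.injective
  refine List.ext_getElem? fun j => ?_
  by_cases hj : j < (f (w' t)).length
  · rw [hwf.getElem?_eq hj, hwf.getElem?_eq (by omega), h₀, Nat.add_assoc,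
      hsh _ (by rw [blockStart_succ] at this; omega)]
  · rw [List.getElem?_eq_none (by omega), List.getElem?_eq_none (by omega)]

theorem add_le_blockStart_of_prefixRepeatsAt_image
    (hsh : PrefixRepeatsAt w L (blockStart f w' n)) (hm : blockStart f w' m < L)
    (hL : L ≤ blockStart f w' (m + 1)) :
    blockStart f w' n + L ≤ blockStart f w' (n + m + 1) := by
  by_contra! hlt
  have h₀ := blockStart_add_of_prefixRepeatsAt_image hf hwf hsh hm m le_rfl
  have := blockStart_strictMono hf.ne_nil w' (Nat.lt_add_one (n + m))
  have := blockStart_succ_le hf hwf (t := m)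
    (i := blockStart f w' (n + m + 1) - blockStart f w' n) (by omega) (by
      rw [← hsh _ (by omega), Nat.add_sub_cancel' (by omega), apply_blockStart hf hwf])
  omega

theorem exists_prefixOccursAt_preimage {k : ℕ} {β b : A} (hocc : PrefixOccursAt w L k β b)
    (hm : blockStart f w' m < L) (hL : L ≤ blockStart f w' (m + 1)) :
    ∃ n, PrefixOccursAt w' m n β (w' (n + 1 + m)) ∧
      (List.range (L - blockStart f w' m)).map (fun j => w (blockStart f w' m + j)) ++ [b] <+:
        f (w' (n + 1 + m)) ++ [α] := by
  obtain ⟨hβ, hsh, hb⟩ := hocc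
  -- the copy of the prefix begins with `α`, hence at a block boundary
  have h₀ := apply_blockStart hf hwf 0
  rw [blockStart_zero] at h₀
  have hk : w (k + 1) = α := (hsh 0 (by omega)).trans h₀
  obtain ⟨_ | n, hn⟩ := (apply_eq_first_iff hf hwf).1 hk
  · simp at hn
  rw [← hn] at hsh hb
  have hstart := blockStart_add_of_prefixRepeatsAt_image hf hwf hsh hm m le_rfl
  have hspill := add_le_blockStart_of_prefixRepeatsAt_image hf hwf hsh hm hL
  rw [blockStart_succ f w' (n + 1 + m), hstart] at hspill
  refine ⟨n, ⟨?_, prefixRepeatsAt_preimage hf hwf hsh hm, rfl⟩, ?_⟩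
  · rw [← hβ, show k = blockStart f w' (n + 1) - 1 by omega, apply_blockStart_succ_sub_one hf hwf]
  · rw [append_singleton_prefix_block_iff hf hwf]
    simp only [List.length_map, List.length_range, List.getElem_map, List.getElem_range]
    refine ⟨by omega, fun j hj => ?_, ?_⟩
    · rw [hstart, Nat.add_assoc, hsh _ (by omega)]
    · rw [hstart, Nat.add_assoc, Nat.add_sub_cancel' hm.le, hb]

theorem prefixOccursAt_image {k : ℕ} {x : List A} {a b β b' : A}
    (hocc : PrefixOccursAt w' m k β b')
    (hx : x ++ [a] <+: f (w' m) ++ [α]) (hb : x ++ [b] <+: f b' ++ [α]) :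
    PrefixOccursAt w (blockStart f w' m + x.length) (blockStart f w' (k + 1) - 1) β b := by
  obtain ⟨hβ, hsh, rfl⟩ := hocc
  rw [append_singleton_prefix_block_iff hf hwf] at hx hb
  obtain ⟨-, hxw, -⟩ := hx
  obtain ⟨-, hbw, hbd⟩ := hb
  have hpos := blockStart_strictMono hf.ne_nil w' (show 0 < k + 1 by omega)
  have hstart := blockStart_add_of_prefixRepeatsAt (f := f) hsh m le_rfl
  rw [blockStart_zero] at hpos
  have hK : blockStart f w' (k + 1) - 1 + 1 = blockStart f w' (k + 1) := Nat.sub_add_cancel hpos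
  refine ⟨by rw [apply_blockStart_succ_sub_one hf hwf, hβ], fun i hi => ?_,
    by rw [hK, ← Nat.add_assoc, ← hstart, hbd]⟩
  rw [hK]
  rcases lt_or_ge i (blockStart f w' m) with him | him
  · exact hwf.prefixRepeatsAt_image hf.ne_nil hsh i him
  · obtain ⟨j, rfl⟩ := Nat.exists_eq_add_of_le him
    rw [← Nat.add_assoc, ← hstart, hbw j (by omega), hxw j (by omega)]

end Desubstitution

section FragSetImage

variable {f : A → List A} {α : A} {w' w : ℕ → A} (hf : IsBLSPWith f α) (hwf : IsImage f w' w)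
  {a b c β γ : A}
include hf hwf

theorem exists_infix_pair_of_prefixOccursAt_zero {k : ℕ} (hocc : PrefixOccursAt w 0 k β b)
    (hb : b ≠ α) : ∃ n, [β, b] <:+: f (w' n) := by
  obtain ⟨rfl, -, rfl⟩ := hocc
  obtain ⟨n, h₁, h₂⟩ := exists_blockStart_le_lt hf.ne_nil w' (k + 1)
  have h₃ : blockStart f w' n ≠ k + 1 := fun heq => hb (heq ▸ apply_blockStart hf hwf n)
  rw [blockStart_succ] at h₂
  refine ⟨n, List.infix_iff_getElem?.2 ⟨k - blockStart f w' n,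
    by simp only [List.length_cons, List.length_nil]; omega, fun t ht => ?_⟩⟩
  have ht₂ : t < 2 := ht
  rw [hwf.getElem?_eq (by omega),
    show blockStart f w' n + (t + (k - blockStart f w' n)) = k + t by omega]
  match t, ht₂ with
  | 0, _ => rfl
  | 1, _ => rfl

theorem exists_mem_fragSet_preimage {L k l : ℕ} (hab : a ≠ b) (hbc : b ≠ c) (hac : a ≠ c)
    (hβγ : β ≠ γ) (hL : 0 < L) (ha : w L = a) (hb : PrefixOccursAt w L k β b)
    (hc : PrefixOccursAt w L l γ c) :
    ∃ a' b' c', (a', b', c', β, γ) ∈ FragSet w' ∧ ∃ x,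
      x ++ [a] <+: f a' ++ [α] ∧ x ++ [b] <+: f b' ++ [α] ∧ x ++ [c] <+: f c' ++ [α] := by
  obtain ⟨m, hm₁, hm₂⟩ := exists_blockStart_le_lt hf.ne_nil w' (L - 1)
  have hm : blockStart f w' m < L := by omega
  have hL' : L ≤ blockStart f w' (m + 1) := by omega
  obtain ⟨nb, hnb, hxb⟩ := exists_prefixOccursAt_preimage hf hwf hb hm hL'
  obtain ⟨nc, hnc, hxc⟩ := exists_prefixOccursAt_preimage hf hwf hc hm hL'
  set x := (List.range (L - blockStart f w' m)).map (fun j => w (blockStart f w' m + j))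
  have hxa : x ++ [a] <+: f (w' m) ++ [α] := by
    rw [blockStart_succ] at hm₂
    refine (append_singleton_prefix_block_iff hf hwf).2
      ⟨by simp only [x, List.length_map, List.length_range]; omega, fun j hj => by simp [x], ?_⟩
    simp only [x, List.length_map, List.length_range, Nat.add_sub_cancel' hm.le, ha]
  refine ⟨w' m, w' (nb + 1 + m), w' (nc + 1 + m),
    mem_fragSet_iff.2 ⟨fun h => ?_, fun h => ?_, fun h => ?_, hβγ, m, rfl, ⟨nb, hnb⟩, nc, hnc⟩,
    x, hxa, hxb, hxc⟩
  · exact hab (List.eq_of_append_singleton_prefix hxa (h ▸ hxb))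
  · exact hbc (List.eq_of_append_singleton_prefix hxb (h ▸ hxc))
  · exact hac (List.eq_of_append_singleton_prefix hxa (h ▸ hxc))

theorem exists_prefixOccursAt_image {a' b' c' : A} {x : List A}
    (h : (a', b', c', β, γ) ∈ FragSet w') (ha : x ++ [a] <+: f a' ++ [α])
    (hb : x ++ [b] <+: f b' ++ [α]) (hc : x ++ [c] <+: f c' ++ [α]) :
    ∃ L, w L = a ∧ (∃ k, PrefixOccursAt w L k β b) ∧ ∃ l, PrefixOccursAt w L l γ c := by
  obtain ⟨-, -, -, -, m, rfl, ⟨k, hk⟩, l, hl⟩ := mem_fragSet_iff.1 h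
  exact ⟨_, ((append_singleton_prefix_block_iff hf hwf).1 ha).2.2,
    ⟨_, prefixOccursAt_image hf hwf hk ha hb⟩, _, prefixOccursAt_image hf hwf hl ha hc⟩

theorem mem_fragSet_image_iff :
    (a, b, c, β, γ) ∈ FragSet w ↔ a ≠ b ∧ b ≠ c ∧ a ≠ c ∧ β ≠ γ ∧
      ((a = α ∧ (∃ n, [β, b] <:+: f (w' n)) ∧ ∃ n, [γ, c] <:+: f (w' n)) ∨
        ∃ a' b' c', (a', b', c', β, γ) ∈ FragSet w' ∧ ∃ x,
          x ++ [a] <+: f a' ++ [α] ∧ x ++ [b] <+: f b' ++ [α] ∧ x ++ [c] <+: f c' ++ [α]) := by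
  rw [mem_fragSet_iff]
  refine and_congr_right fun hab => and_congr_right fun hbc => and_congr_right fun hac =>
    and_congr_right fun hβγ => ⟨?_, ?_⟩
  · rintro ⟨_ | L, ha, ⟨k, hk⟩, l, hl⟩
    · have hα : a = α := by rw [← ha, ← apply_blockStart hf hwf 0, blockStart_zero]
      exact .inl ⟨hα, exists_infix_pair_of_prefixOccursAt_zero hf hwf hk (hα ▸ hab.symm),
        exists_infix_pair_of_prefixOccursAt_zero hf hwf hl (hα ▸ hac.symm)⟩
    · exact .inr (exists_mem_fragSet_preimage hf hwf hab hbc hac hβγ L.succ_pos ha hk hl)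
  · rintro (⟨rfl, ⟨n, hn⟩, n', hn'⟩ | ⟨a', b', c', h, x, ha, hb, hc⟩)
    · exact ⟨0, by rw [← apply_blockStart hf hwf 0, blockStart_zero],
        hwf.exists_prefixOccursAt_zero_of_infix hn, hwf.exists_prefixOccursAt_zero_of_infix hn'⟩
    · exact exists_prefixOccursAt_image hf hwf h ha hb hc

end FragSetImage

end BLSPWords

theorem transition_of_lsp_words_general {A : Type*} (w w' : ℕ → A)
    (hw : LSPInf w) (hw' : LSPInf w')
    (f g : A → List A) (hf : IsBLSP f)
    (hwf : IsImage f w' w) :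
    Transition ⟨Set.range w, f, FragSet w⟩ f ⟨Set.range w', g, FragSet w'⟩ := by
  obtain ⟨α, hfα⟩ := hf.exists_isBLSPWith
  refine ⟨hf, rfl, hwf.range_eq hfα.ne_nil, ?_, fun a b c β γ => ?_⟩
  · rintro a b c β γ ⟨-, -, -, hβγ, u, hu⟩ hbreak
    exact hbreak w' hw' ⟨β, γ, hβγ, u, hu⟩ w hwf hw
  · simp only [hfα.map_eq_singleton_iff, Set.exists_range_iff, exists_eq_left]
    rw [← mem_fragSet_image_iff hfα hwf]
    refine ⟨fun h => ?_, fun h => h.2.2.2.2.2⟩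
    obtain ⟨ha, hb, hc, hβ, hγ⟩ := mem_range_of_mem_fragSet h
    exact ⟨ha, hb, hc, hβ, hγ, h⟩

theorem transition_of_lsp_words {A : Type*} [Fintype A] (w w' w'' : ℕ → A)
    (hw : LSPInf w) (hw' : LSPInf w') (hw'' : LSPInf w'')
    (f g : A → List A) (hf : IsBLSP f) (hg : IsBLSP g)
    (hwf : IsImage f w' w) (hw'g : IsImage g w'' w') :
    Transition ⟨Set.range w, f, FragSet w⟩ f ⟨Set.range w', g, FragSet w'⟩ :=
  transition_of_lsp_words_general w w' hw hw' f g hf hwf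
end

section
/- For every non-empty finite LSP word w over an alphabet A, there exists a letter a occurring in w such that the word wa is LSP. -/
/-!
Let `b` be the longest proper border of `w` (a proper prefix that is also a suffix) and `a` the
letter following it in `w`. A left special factor of `wa` that is not already one of `w` has the
form `ua`, where `yu` is a suffix of `w` and `xua` a factor of `w` with `x ≠ y`. Then `u` is left
special in `w`, hence a border, so `|u| ≤ |b|`. If `u = b`, then `ua = ba` is a prefix of `w`.
Otherwise `yu` is a suffix of `b`, so `yua` is a suffix of the prefix `ba`; thus `ua` is left
special in `w`, hence a prefix of `w`.
-/

/-- The finite word `w` is LSP: every left special factor of `w` is a prefix of `w`. -/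
def LSPFin {A : Type*} (w : List A) : Prop :=
  ∀ (u : List A) (a b : A), a ≠ b → (a :: u) <:+: w → (b :: u) <:+: w → u <+: w

section
variable {A : Type*}

open scoped Classical

noncomputable def longestBorderLength (w : List A) : ℕ :=
  Nat.findGreatest (fun k => w.take k <:+ w) (w.length - 1)

theorem take_longestBorderLength_suffix (w : List A) : w.take (longestBorderLength w) <:+ w :=
  Nat.findGreatest_spec (P := fun k => w.take k <:+ w) (Nat.zero_le _) (by simp)

theorem longestBorderLength_lt {w : List A} (hw : w ≠ []) : longestBorderLength w < w.length :=
  (Nat.findGreatest_le _).trans_lt (by have := List.length_pos_iff.mpr hw; omega)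

theorem length_le_longestBorderLength {u w : List A} (hp : u <+: w) (hs : u <:+ w)
    (hlt : u.length < w.length) : u.length ≤ longestBorderLength w :=
  Nat.le_findGreatest (P := fun k => w.take k <:+ w) (by omega)
    (by rwa [← List.prefix_iff_eq_take.mp hp])

theorem LSPFin.append_singleton {w : List A} {a : A} (hw : LSPFin w)
    (hnew : ∀ (x y : A) (u : List A), x ≠ y → x :: (u ++ [a]) <:+: w → y :: u <:+ w →
      u ++ [a] <+: w) :
    LSPFin (w ++ [a]) := by
  have special_at_end : ∀ (u : List A) (c d : A), c ≠ d → c :: u <:+: w →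
      d :: u <:+ w ++ [a] → u <+: w ++ [a] := by
    intro u c d hcd hc hd
    rcases u.eq_nil_or_concat' with rfl | ⟨u', b, rfl⟩
    · exact List.nil_prefix
    obtain ⟨t, ht, hts⟩ := (List.suffix_concat_iff.mp hd).resolve_left (List.cons_ne_nil _ _)
    obtain ⟨rfl, hb⟩ := List.append_inj' (s₁ := d :: u') ht rfl
    obtain rfl : b = a := by simpa using hb
    exact (hnew c d u' hcd hc hts).trans (List.prefix_append _ _)
  intro u c d hcd hc hd
  rcases List.infix_concat_iff.mp hc, List.infix_concat_iff.mp hd with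
    ⟨hc | hc, hd | hd⟩
  · exact absurd (List.cons_eq_cons.mp
      ((List.suffix_of_suffix_length_le hc hd le_rfl).eq_of_length rfl)).1 hcd
  · exact special_at_end u d c hcd.symm hd hc
  · exact special_at_end u c d hcd hc hd
  · exact (hw u c d hcd hc hd).trans (List.prefix_append _ _)

theorem LSPFin.prefix_of_infix_of_suffix {w u : List A} {a x y : A} (hw : LSPFin w)
    (ha : w.take (longestBorderLength w) ++ [a] <+: w) (hxy : x ≠ y)
    (hx : x :: (u ++ [a]) <:+: w) (hy : y :: u <:+ w) : u ++ [a] <+: w := by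
  set m := longestBorderLength w
  have hu_prefix : u <+: w :=
    hw u x y hxy ((List.prefix_append (x :: u) [a]).isInfix.trans hx) hy.isInfix
  have hy_length : u.length + 1 ≤ w.length := by simpa using hy.length_le
  have hu_border : u.length ≤ m :=
    length_le_longestBorderLength hu_prefix ((List.suffix_cons y u).trans hy) (by omega)
  rcases hu_border.eq_or_lt with hum | hum
  · rwa [List.prefix_iff_eq_take.mp hu_prefix, hum]
  · have hy_border : y :: u <:+ w.take m :=
      List.suffix_of_suffix_length_le hy (take_longestBorderLength_suffix w)
        (by simp only [List.length_cons, List.length_take]; omega)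
    have hy_factor : y :: (u ++ [a]) <:+: w :=
      ((List.suffix_append_inj_of_length_eq rfl).mpr ⟨hy_border, rfl⟩).isInfix.trans ha.isInfix
    exact hw (u ++ [a]) x y hxy hx hy_factor

end

theorem lsp_right_extendable {A : Type*} (w : List A) (hne : w ≠ [])
    (hw : LSPFin w) : ∃ a : A, a ∈ w ∧ LSPFin (w ++ [a]) := by
  have hm := longestBorderLength_lt hne
  have ha : w.take (longestBorderLength w) ++ [w[longestBorderLength w]] <+: w := by
    rw [List.take_concat_get']
    exact List.take_prefix _ _
  exact ⟨_, List.getElem_mem hm,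
    hw.append_singleton fun _ _ _ hxy hx hy => hw.prefix_of_infix_of_suffix ha hxy hx hy⟩
end

section
/- Let w be a non-empty finite LSP word, let u be the longest border of w (the longest word distinct from w that is both a prefix and a suffix of w), and write w = pu. Then p is non-empty and the periodic infinite word p^ω (the infinite word obtained by repeating p forever) is LSP. -/
/-!
Write `q = |p|`, so that `w` has period `q` and is a prefix of `v = p^ω`. A letter-extended
factor `c s` of `v` can be moved, by periodicity, to start at a position `i < q`. If two such
occurrences `a s` at `i` and `b s` at `j`, with `i < j < q - 1`, both fit inside `w`, then `s` is
left special in `w` and hence a prefix of `w`. Otherwise the suffix of `w` starting at `j + 1`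
also occurs at `i + 1`; extending this second occurrence to the left until it either reaches
the start of `w` or meets a mismatch (where it becomes left special, hence a prefix) yields a
border of `w` of length at least `|w| - (j + 1) > |u|`, contradicting maximality of `u`.
-/

open List Function

section

variable {A : Type*}

def IsBorder (b w : List A) : Prop := b <+: w ∧ b <:+ w ∧ b ≠ w

theorem isBorder_drop {w : List A} {m : ℕ} (h : w.drop m <+: w) (hm : 0 < m)
    (hmw : m ≤ w.length) : IsBorder (w.drop m) w := by
  refine ⟨h, drop_suffix m w, fun heq => ?_⟩
  have := congrArg length heq
  simp only [length_drop] at this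
  omega

theorem LSPFin.exists_isBorder_of_drop_prefix_drop {w : List A} (hw : LSPFin w) :
    ∀ {i m : ℕ}, i < m → m ≤ w.length → w.drop m <+: w.drop i →
      ∃ b, IsBorder b w ∧ w.length - m ≤ b.length
  | 0, m, him, hmw, hocc => ⟨w.drop m, isBorder_drop hocc him hmw, by simp⟩
  | i + 1, m, him, hmw, hocc => by
    have hdi : w.drop i = w[i] :: w.drop (i + 1) := drop_eq_getElem_cons (by omega)
    have hdm : w.drop (m - 1) = w[m - 1] :: w.drop m := by
      rw [drop_eq_getElem_cons (by omega), Nat.sub_add_cancel (by omega)]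
    by_cases hc : w[i] = w[m - 1]
    · obtain ⟨b, hb, hlen⟩ := hw.exists_isBorder_of_drop_prefix_drop (i := i) (m := m - 1)
        (by omega) (by omega) (by rw [hdi, hdm, cons_prefix_cons]; exact ⟨hc.symm, hocc⟩)
      exact ⟨b, hb, by omega⟩
    · have hpre : w.drop m <+: w := hw _ _ _ hc
        ((cons_prefix_cons.2 ⟨rfl, hocc⟩).isInfix.trans (hdi ▸ (drop_suffix i w).isInfix))
        (hdm ▸ (drop_suffix (m - 1) w).isInfix)
      exact ⟨_, isBorder_drop hpre (by omega) hmw, (length_drop ..).ge⟩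

def OccursAt (v : ℕ → A) (s : List A) (k : ℕ) : Prop :=
  ∀ i (h : i < s.length), s[i] = v (k + i)

theorem occursAt_cons {v : ℕ → A} {c : A} {s : List A} {k : ℕ} :
    OccursAt v (c :: s) k ↔ v k = c ∧ OccursAt v s (k + 1) := by
  constructor
  · intro h
    refine ⟨(h 0 (by simp)).symm, fun i hi => ?_⟩
    have := h (i + 1) (by simpa using hi)
    rw [getElem_cons_succ] at this
    rw [this, Nat.add_right_comm, Nat.add_assoc]
  · rintro ⟨hc, hs⟩ (_ | i) hi
    · simpa using hc.symm
    · rw [getElem_cons_succ, hs i (by simpa using hi), Nat.add_right_comm, Nat.add_assoc]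

theorem prefI_iff_occursAt_zero {v : ℕ → A} {s : List A} : PrefI s v ↔ OccursAt v s 0 := by
  simp only [PrefI, OccursAt, Nat.zero_add]

theorem OccursAt.mod {v : ℕ → A} {q : ℕ} (hper : Periodic v q) {s : List A} {k : ℕ}
    (h : OccursAt v s k) : OccursAt v s (k % q) := by
  intro i hi
  rw [h i hi, ← hper.nat_mul (k / q) (k % q + i), Nat.cast_id]
  congr 1
  have := Nat.mod_add_div k q
  rw [Nat.mul_comm] at this
  omega

theorem OccursAt.prefI_of_periodic {v : ℕ → A} {q : ℕ} (hper : Periodic v q) {s : List A}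
    (h : OccursAt v s q) : PrefI s v := by
  have := h.mod hper
  rwa [Nat.mod_self, ← prefI_iff_occursAt_zero] at this

theorem PrefI.of_prefix {v : ℕ → A} {w s : List A} (hwv : PrefI w v) (h : s <+: w) :
    PrefI s v :=
  fun i hi => (h.getElem hi).trans (hwv i (hi.trans_le h.length_le))

theorem PrefI.take_drop_eq_take {v : ℕ → A} {w s : List A} {k : ℕ} (hwv : PrefI w v)
    (h : OccursAt v s k) : (w.drop k).take s.length = s.take (w.length - k) := by
  apply ext_getElem
  · simp only [length_take, length_drop]
    omega
  · intro i h₁ h₂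
    simp only [length_take, length_drop] at h₁
    rw [getElem_take, getElem_drop, getElem_take, hwv _ (by omega), h]

theorem PrefI.infix_of_occursAt {v : ℕ → A} {w s : List A} {k : ℕ} (hwv : PrefI w v)
    (h : OccursAt v s k) (hk : k + s.length ≤ w.length) : s <:+: w := by
  have hs := hwv.take_drop_eq_take h
  rw [take_of_length_le (l := s) (by omega)] at hs
  exact hs ▸ (take_prefix _ _).isInfix.trans (drop_suffix k w).isInfix

theorem PrefI.append_of_periodic {v : ℕ → A} {p u : List A} (hp : 0 < p.length)
    (hpv : PrefI p v) (hper : Periodic v p.length) (hu : u <+: p ++ u) : PrefI (p ++ u) v := by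
  intro i
  induction i using Nat.strong_induction_on with
  | _ i ih =>
    intro hi
    rcases lt_or_ge i p.length with h | h
    · rw [getElem_append_left h]
      exact hpv i h
    · have hiu : i - p.length < u.length := by simp only [length_append] at hi; omega
      rw [getElem_append_right h, hu.getElem hiu, ih _ (by omega), ← hper,
        Nat.sub_add_cancel h]

theorem LSPFin.prefI_of_occursAt_lt {w : List A} {v : ℕ → A} {q : ℕ} (hw : LSPFin w)
    (hwv : PrefI w v) (hqw : q ≤ w.length) (hmax : ∀ b, IsBorder b w → b.length + q ≤ w.length)
    {s : List A} {a b : A} {i j : ℕ} (hab : a ≠ b) (ha : OccursAt v (a :: s) i)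
    (hb : OccursAt v (b :: s) j) (hij : i < j) (hjq : j + 1 < q) : PrefI s v := by
  by_cases hfit : j + (b :: s).length ≤ w.length
  · have ha' : (a :: s) <:+: w := hwv.infix_of_occursAt ha (by simp only [length_cons] at *; omega)
    exact hwv.of_prefix (hw s a b hab ha' (hwv.infix_of_occursAt hb hfit))
  · exfalso
    have hs₁ := hwv.take_drop_eq_take (occursAt_cons.1 ha).2
    have hs₂ := hwv.take_drop_eq_take (occursAt_cons.1 hb).2
    simp only [length_cons] at hfit
    rw [take_of_length_le (l := w.drop (j + 1)) (by simp only [length_drop]; omega)] at hs₂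
    have hocc : w.drop (j + 1) <+: w.drop (i + 1) := by
      rw [hs₂]
      refine (take_prefix_take_left (j := w.length - (i + 1)) (by omega)).trans ?_
      rw [← hs₁]
      exact take_prefix _ _
    obtain ⟨c, hc, hlen⟩ := hw.exists_isBorder_of_drop_prefix_drop (by omega) (by omega) hocc
    have := hmax c hc
    omega

theorem LSPFin.lspInf_of_periodic {w : List A} {v : ℕ → A} {q : ℕ} (hw : LSPFin w)
    (hwv : PrefI w v) (hper : Periodic v q) (hq : 0 < q) (hqw : q ≤ w.length)
    (hmax : ∀ b, IsBorder b w → b.length + q ≤ w.length) : LSPInf v := by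
  intro s a b hab ⟨k₁, (h₁ : OccursAt v (a :: s) k₁)⟩ ⟨k₂, (h₂ : OccursAt v (b :: s) k₂)⟩
  replace h₁ := h₁.mod hper
  replace h₂ := h₂.mod hper
  obtain ⟨ha, hs₁⟩ := occursAt_cons.1 h₁
  obtain ⟨hb, hs₂⟩ := occursAt_cons.1 h₂
  have h₁q := Nat.mod_lt k₁ hq
  have h₂q := Nat.mod_lt k₂ hq
  rcases lt_trichotomy (k₁ % q) (k₂ % q) with h | h | h
  · by_cases hj : k₂ % q + 1 = q
    · exact (hj ▸ hs₂).prefI_of_periodic hper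
    · exact hw.prefI_of_occursAt_lt hwv hqw hmax hab h₁ h₂ h (by omega)
  · exact absurd (ha.symm.trans (h ▸ hb)) hab
  · by_cases hi : k₁ % q + 1 = q
    · exact (hi ▸ hs₁).prefI_of_periodic hper
    · exact hw.prefI_of_occursAt_lt hwv hqw hmax hab.symm h₂ h₁ h (by omega)

end

theorem periodic_extension_lsp_general {A : Type*} (w p u : List A)
    (hw : LSPFin w)
    (hupre : u <+: w) (hune : u ≠ w)
    (hmax : ∀ u' : List A, u' <+: w → u' <:+ w → u' ≠ w → u'.length ≤ u.length)
    (hdec : w = p ++ u) :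
    p ≠ [] ∧ ∀ v : ℕ → A, PrefI p v → (∀ n, v (n + p.length) = v n) → LSPInf v := by
  have hp : p ≠ [] := by
    rintro rfl
    exact hune (by simpa using hdec.symm)
  refine ⟨hp, fun v hpv hper => ?_⟩
  have hq : 0 < p.length := length_pos_iff.mpr hp
  have hlen : w.length = p.length + u.length := by rw [hdec, length_append]
  have hwv : PrefI w v := hdec ▸ PrefI.append_of_periodic hq hpv hper (hdec ▸ hupre)
  refine hw.lspInf_of_periodic hwv hper hq (by omega) fun b hb => ?_
  have := hmax b hb.1 hb.2.1 hb.2.2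
  omega

theorem periodic_extension_lsp {A : Type*} (w p u : List A) (hne : w ≠ [])
    (hw : LSPFin w)
    (hupre : u <+: w) (husuf : u <:+ w) (hune : u ≠ w)
    (hmax : ∀ u' : List A, u' <+: w → u' <:+ w → u' ≠ w → u'.length ≤ u.length)
    (hdec : w = p ++ u) :
    p ≠ [] ∧ ∀ v : ℕ → A, PrefI p v → (∀ n, v (n + p.length) = v n) → LSPInf v :=
  periodic_extension_lsp_general w p u hw hupre hune hmax hdec
end
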